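/- Let A_1, …, A_N be n×n nonnegative matrices that pairwise commute with respect to the max-times product and satisfy μ(A_i) ≤ 1 for every i. Then for every p ≥ 1 and every word ω = (ω_1,…,ω_p) ∈ {1,…,N}^p, the associated product A_ω = A_{ω_p} ⊗ ⋯ ⊗ A_{ω_1} satisfies μ(A_ω) ≤ μ(A_{ω_p})·μ(A_{ω_{p−1}})⋯μ(A_{ω_1}) ≤ 1. -/

import Mathlib

open Filter Topology

/-- Max-times product of two square nonnegative matrices. -/
noncomputable def mProd {m : Type*} [Fintype m] (A B : Matrix m m NNReal) : Matrix m m NNReal :=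
  fun i j => Finset.univ.sup fun k => A i k * B k j

/-- Max-times powers: `mPow A 0 = I`, `mPow A (k+1) = A ⊗ mPow A k`. -/
noncomputable def mPow {m : Type*} [Fintype m] [DecidableEq m] (A : Matrix m m NNReal) :
    ℕ → Matrix m m NNReal
  | 0 => 1
  | k + 1 => mProd A (mPow A k)

/-- Max-times action of a matrix on a nonnegative vector. -/
noncomputable def mVec {m : Type*} [Fintype m] (A : Matrix m m NNReal) (x : m → NNReal) :
    m → NNReal :=
  fun i => Finset.univ.sup fun k => A i k * x k

/-- Maximum circuit geometric mean of a nonnegative matrix. -/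
noncomputable def mu {m : Type*} [Fintype m] [DecidableEq m] (A : Matrix m m NNReal) : NNReal :=
  (Finset.Icc 1 (Fintype.card m)).sup fun ℓ =>
    Finset.univ.sup fun i => (mPow A ℓ i i) ^ ((ℓ : ℝ)⁻¹)

/-- The max-times product `A_{ω_p} ⊗ ⋯ ⊗ A_{ω_1}` associated to a word `ω`. -/
noncomputable def wordProd {m : Type*} [Fintype m] [DecidableEq m] {N : ℕ}
    (A : Fin N → Matrix m m NNReal) : ∀ {p : ℕ}, (Fin p → Fin N) → Matrix m m NNReal
  | 0, _ => 1
  | p + 1, ω => mProd (A (ω (Fin.last p))) (wordProd A fun i : Fin p => ω i.castSucc)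

/-!
Entries of the max-times powers of `A` grow at most like `mu A ^ L`: a walk longer than `n`
contains a circuit of length `c ≤ n` and weight at most `mu A ^ c`, and cutting circuits out
leaves a walk of length at most `n`. If `A` and `B` commute, `(A ⊗ B)^{⊗ℓk} = A^{⊗ℓk} ⊗ B^{⊗ℓk}`,
so the `k`-th power of a diagonal entry of `(A ⊗ B)^{⊗ℓ}` is at most
`(mu A * mu B) ^ (ℓ k)` times a constant; letting `k → ∞` gives `mu (A ⊗ B) ≤ mu A * mu B`,
and induction on the word finishes the proof.
-/

open Finset

section MaxTimesAlgebra

variable {m : Type*} [Fintype m]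

lemma mProd_apply (A B : Matrix m m NNReal) (i j : m) :
    mProd A B i j = univ.sup fun k => A i k * B k j :=
  rfl

lemma mProd_assoc (A B C : Matrix m m NNReal) :
    mProd (mProd A B) C = mProd A (mProd B C) := by
  funext i j
  simp only [mProd_apply, NNReal.finset_sup_mul, NNReal.mul_finset_sup, mul_assoc]
  exact Finset.sup_comm _ _ _

variable [DecidableEq m]

lemma mProd_one (A : Matrix m m NNReal) : mProd A 1 = A := by
  funext i j
  refine le_antisymm (Finset.sup_le fun k _ => ?_) ?_
  · rcases eq_or_ne k j with rfl | hkj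
    · simp
    · simp [Matrix.one_apply_ne hkj]
  · simpa [mProd_apply] using
      Finset.le_sup (f := fun k => A i k * (1 : Matrix m m NNReal) k j) (mem_univ j)

lemma one_mProd (A : Matrix m m NNReal) : mProd 1 A = A := by
  funext i j
  refine le_antisymm (Finset.sup_le fun k _ => ?_) ?_
  · rcases eq_or_ne i k with rfl | hik
    · simp
    · simp [Matrix.one_apply_ne hik]
  · simpa [mProd_apply] using
      Finset.le_sup (f := fun k => (1 : Matrix m m NNReal) i k * A k j) (mem_univ i)

lemma mPow_zero (A : Matrix m m NNReal) : mPow A 0 = 1 :=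
  rfl

lemma mPow_succ (A : Matrix m m NNReal) (k : ℕ) : mPow A (k + 1) = mProd A (mPow A k) :=
  rfl

lemma mPow_one (A : Matrix m m NNReal) : mPow A 1 = A :=
  mProd_one A

lemma mPow_add (A : Matrix m m NNReal) (a b : ℕ) :
    mPow A (a + b) = mProd (mPow A a) (mPow A b) := by
  induction a with
  | zero => rw [zero_add, mPow_zero, one_mProd]
  | succ a ih => rw [add_right_comm, mPow_succ, ih, mPow_succ, mProd_assoc]

lemma one_mPow (k : ℕ) : mPow (1 : Matrix m m NNReal) k = 1 := by
  induction k with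
  | zero => rfl
  | succ k ih => rw [mPow_succ, ih, mProd_one]

lemma mPow_apply_self_pow_le (A : Matrix m m NNReal) (ℓ k : ℕ) (i : m) :
    mPow A ℓ i i ^ k ≤ mPow A (ℓ * k) i i := by
  induction k with
  | zero => simp [mPow_zero]
  | succ k ih =>
    rw [pow_succ, Nat.mul_succ, mPow_add, mProd_apply]
    exact (mul_le_mul_left ih _).trans
      (Finset.le_sup (f := fun j => mPow A (ℓ * k) i j * mPow A ℓ j i) (mem_univ i))

lemma mProd_mPow_comm {A B : Matrix m m NNReal} (h : mProd A B = mProd B A) (k : ℕ) :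
    mProd A (mPow B k) = mProd (mPow B k) A := by
  induction k with
  | zero => rw [mPow_zero, mProd_one, one_mProd]
  | succ k ih => rw [mPow_succ, ← mProd_assoc, h, mProd_assoc, ih, mProd_assoc]

lemma mPow_mProd_of_comm {A B : Matrix m m NNReal} (h : mProd A B = mProd B A) (k : ℕ) :
    mPow (mProd A B) k = mProd (mPow A k) (mPow B k) := by
  induction k with
  | zero => rw [mPow_zero, mPow_zero, mPow_zero, mProd_one]
  | succ k ih =>
    rw [mPow_succ, ih, mPow_succ, mPow_succ, mProd_assoc, ← mProd_assoc B,
      mProd_mPow_comm h.symm, mProd_assoc, ← mProd_assoc A]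

end MaxTimesAlgebra

section Walks

variable {m : Type*}

def walkWeight (A : Matrix m m NNReal) (L : ℕ) (f : ℕ → m) : NNReal :=
  ∏ t ∈ range L, A (f t) (f (t + 1))

lemma walkWeight_add (A : Matrix m m NNReal) (a b : ℕ) (f : ℕ → m) :
    walkWeight A (a + b) f = walkWeight A a f * walkWeight A b fun u => f (a + u) := by
  simp only [walkWeight, prod_range_add, add_assoc]

variable [Fintype m] [DecidableEq m]

lemma walkWeight_le_mPow (A : Matrix m m NNReal) (L : ℕ) (f : ℕ → m) :
    walkWeight A L f ≤ mPow A L (f 0) (f L) := by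
  induction L generalizing f with
  | zero => simp [walkWeight, mPow_zero]
  | succ L ih =>
    rw [add_comm L 1, walkWeight_add, walkWeight, prod_range_one, zero_add, mPow_add,
      mPow_one, mProd_apply]
    exact (mul_le_mul_right (ih _) _).trans
      (Finset.le_sup (f := fun k => A (f 0) k * mPow A L k (f (1 + L))) (mem_univ (f 1)))

lemma walkWeight_le_mPow_of_eq (A : Matrix m m NNReal) {L : ℕ} {f : ℕ → m} {i j : m}
    (hi : f 0 = i) (hj : f L = j) : walkWeight A L f ≤ mPow A L i j :=
  hi ▸ hj ▸ walkWeight_le_mPow A L f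

lemma exists_walkWeight_eq_mPow (A : Matrix m m NNReal) {L : ℕ} (hL : 1 ≤ L) (i j : m) :
    ∃ f : ℕ → m, f 0 = i ∧ f L = j ∧ walkWeight A L f = mPow A L i j := by
  induction L, hL using Nat.le_induction generalizing i with
  | base => exact ⟨fun t => if t = 0 then i else j, rfl, rfl, by simp [walkWeight, mPow_one]⟩
  | succ L _ ih =>
    obtain ⟨k, -, hk⟩ :=
      Finset.exists_mem_eq_sup univ ⟨i, mem_univ i⟩ fun k => A i k * mPow A L k j
    obtain ⟨f, hf0, hfL, hf⟩ := ih k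
    refine ⟨fun t => if t = 0 then i else f (t - 1), rfl, by simpa using hfL, ?_⟩
    rw [mPow_succ, mProd_apply, hk, add_comm L 1, walkWeight_add, ← hf]
    simp [walkWeight, hf0]

end Walks

section CircuitMean

variable {m : Type*} [Fintype m] [DecidableEq m]

lemma mu_le_iff {A : Matrix m m NNReal} {r : NNReal} :
    mu A ≤ r ↔ ∀ ℓ ∈ Icc 1 (Fintype.card m), ∀ i, mPow A ℓ i i ≤ r ^ ℓ := by
  simp only [mu, Finset.sup_le_iff, mem_univ, true_implies]
  refine forall₂_congr fun ℓ hℓ => forall_congr' fun i => ?_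
  have hℓ : (0 : ℝ) < ℓ := by exact_mod_cast (mem_Icc.mp hℓ).1
  rw [NNReal.rpow_inv_le_iff hℓ, NNReal.rpow_natCast]

lemma mPow_apply_self_le_mu_pow (A : Matrix m m NNReal) {ℓ : ℕ} (h1 : 1 ≤ ℓ)
    (hn : ℓ ≤ Fintype.card m) (i : m) : mPow A ℓ i i ≤ mu A ^ ℓ :=
  mu_le_iff.mp le_rfl ℓ (mem_Icc.mpr ⟨h1, hn⟩) i

lemma exists_mPow_le_mu_pow_mul_mPow_sub (A : Matrix m m NNReal) {L : ℕ}
    (hL : Fintype.card m < L) (i j : m) :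
    ∃ c, 1 ≤ c ∧ c ≤ Fintype.card m ∧ mPow A L i j ≤ mu A ^ c * mPow A (L - c) i j := by
  set n := Fintype.card m
  obtain ⟨f, hf0, hfL, hf⟩ := exists_walkWeight_eq_mPow A (by omega : 1 ≤ L) i j
  obtain ⟨a, b, hab, hfab⟩ :=
    Fintype.exists_ne_map_eq_of_card_lt (fun x : Fin (n + 1) => f x) (by simp [n])
  obtain ⟨s, t, hst, htn, hfst⟩ : ∃ s t : ℕ, s < t ∧ t ≤ n ∧ f s = f t := by
    rcases Fin.lt_or_lt_of_ne hab with h | h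
    · exact ⟨a, b, h, Fin.is_le b, hfab⟩
    · exact ⟨b, a, h, Fin.is_le a, hfab.symm⟩
  refine ⟨t - s, by omega, by omega, ?_⟩
  have hsplit : L = s + ((t - s) + (L - t)) := by omega
  rw [← hf, hsplit, walkWeight_add, walkWeight_add, mul_left_comm,
    show s + (t - s + (L - t)) - (t - s) = s + (L - t) by omega, mPow_add]
  have hs : s + (t - s) = t := by omega
  have hcirc : walkWeight A (t - s) (fun u => f (s + u)) ≤ mu A ^ (t - s) :=
    (walkWeight_le_mPow_of_eq A rfl (by rw [hs, hfst])).trans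
      (mPow_apply_self_le_mu_pow A (by omega) (by omega) (f s))
  have hrest : walkWeight A s f * walkWeight A (L - t) (fun u => f (s + (t - s + u)))
      ≤ mProd (mPow A s) (mPow A (L - t)) i j :=
    (mul_le_mul' (walkWeight_le_mPow_of_eq A hf0 rfl)
      (walkWeight_le_mPow_of_eq A (by rw [add_zero, hs, hfst])
        (by rw [← add_assoc, hs, Nat.add_sub_cancel' (by omega), hfL]))).trans
      (Finset.le_sup (f := fun k => mPow A s i k * mPow A (L - t) k j) (mem_univ (f s)))
  exact mul_le_mul' hcirc hrest

end CircuitMean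

section Growth

variable {m : Type*} [Fintype m] [DecidableEq m]

lemma exists_mPow_le_mu_pow_sub_mul_mPow (A : Matrix m m NNReal) (L : ℕ) (i j : m) :
    ∃ d ≤ Fintype.card m, d ≤ L ∧ mPow A L i j ≤ mu A ^ (L - d) * mPow A d i j := by
  induction L using Nat.strong_induction_on with
  | _ L ih =>
  by_cases hL : L ≤ Fintype.card m
  · exact ⟨L, hL, le_rfl, by simp⟩
  obtain ⟨c, hc1, hcn, hc⟩ := exists_mPow_le_mu_pow_mul_mPow_sub A (not_le.mp hL) i j
  obtain ⟨d, hdn, hdL, hd⟩ := ih (L - c) (by omega)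
  refine ⟨d, hdn, by omega, ?_⟩
  calc mPow A L i j ≤ mu A ^ c * (mu A ^ (L - c - d) * mPow A d i j) :=
        hc.trans (mul_le_mul_right hd _)
    _ = mu A ^ (L - d) * mPow A d i j := by
        rw [← mul_assoc, ← pow_add, show c + (L - c - d) = L - d by omega]

lemma exists_mPow_le_mu_pow_mul (A : Matrix m m NNReal) :
    ∃ C, ∀ L, Fintype.card m < L → ∀ i j, mPow A L i j ≤ mu A ^ L * C := by
  refine ⟨univ.sup fun x : Fin (Fintype.card m + 1) × m × m =>
    (mu A ^ (x.1 : ℕ))⁻¹ * mPow A x.1 x.2.1 x.2.2, fun L hL i j => ?_⟩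
  obtain ⟨d, hdn, -, hd⟩ := exists_mPow_le_mu_pow_sub_mul_mPow A L i j
  calc mPow A L i j ≤ mu A ^ (L - d) * mPow A d i j := hd
    _ = mu A ^ L * ((mu A ^ d)⁻¹ * mPow A d i j) := by
        rw [pow_sub_of_lt _ (by omega), mul_assoc]
    _ ≤ _ := mul_le_mul_right (Finset.le_sup (f := fun x : Fin (Fintype.card m + 1) × m × m =>
        (mu A ^ (x.1 : ℕ))⁻¹ * mPow A x.1 x.2.1 x.2.2) (mem_univ (⟨d, by omega⟩, i, j))) _

end Growth

lemma NNReal.le_of_eventually_pow_le_pow_mul {x y C : NNReal}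
    (h : ∀ᶠ k in atTop, x ^ k ≤ y ^ k * C) : x ≤ y := by
  by_contra! hyx
  have hx : 0 < x := hyx.trans_le' bot_le
  have hlim : Tendsto (fun k => (y / x) ^ k * C) atTop (𝓝 0) := by
    simpa using (NNReal.tendsto_pow_atTop_nhds_zero_of_lt_one
      ((div_lt_one hx).mpr hyx)).mul_const C
  obtain ⟨k, hk, hk1⟩ := (h.and (hlim.eventually_lt_const zero_lt_one)).exists
  rw [div_pow, div_mul_eq_mul_div, div_lt_one (pow_pos hx k)] at hk1
  exact hk.not_gt hk1

theorem mu_mProd_le_of_comm {m : Type*} [Fintype m] [DecidableEq m] {A B : Matrix m m NNReal}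
    (h : mProd A B = mProd B A) : mu (mProd A B) ≤ mu A * mu B := by
  obtain ⟨CA, hCA⟩ := exists_mPow_le_mu_pow_mul A
  obtain ⟨CB, hCB⟩ := exists_mPow_le_mu_pow_mul B
  refine mu_le_iff.mpr fun ℓ hℓ i => NNReal.le_of_eventually_pow_le_pow_mul (C := CA * CB) ?_
  filter_upwards [eventually_gt_atTop (Fintype.card m)] with k hk
  have hℓk : Fintype.card m < ℓ * k := hk.trans_le (Nat.le_mul_of_pos_left k (mem_Icc.mp hℓ).1)
  calc mPow (mProd A B) ℓ i i ^ k ≤ mProd (mPow A (ℓ * k)) (mPow B (ℓ * k)) i i := by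
        rw [← mPow_mProd_of_comm h]; exact mPow_apply_self_pow_le _ ℓ k i
    _ ≤ mu A ^ (ℓ * k) * CA * (mu B ^ (ℓ * k) * CB) :=
        Finset.sup_le fun j _ => mul_le_mul' (hCA _ hℓk i j) (hCB _ hℓk j i)
    _ = ((mu A * mu B) ^ ℓ) ^ k * (CA * CB) := by ring

section Words

variable {m : Type*} [Fintype m] [DecidableEq m] {N : ℕ} {A : Fin N → Matrix m m NNReal}

lemma mProd_wordProd_comm (hcomm : ∀ i i', mProd (A i) (A i') = mProd (A i') (A i))
    (j : Fin N) {p : ℕ} (ω : Fin p → Fin N) :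
    mProd (A j) (wordProd A ω) = mProd (wordProd A ω) (A j) := by
  induction p with
  | zero => rw [wordProd, mProd_one, one_mProd]
  | succ p ih => rw [wordProd, ← mProd_assoc, hcomm, mProd_assoc, ih, mProd_assoc]

lemma mu_wordProd_le_prod (hcomm : ∀ i i', mProd (A i) (A i') = mProd (A i') (A i))
    {p : ℕ} (ω : Fin p → Fin N) : mu (wordProd A ω) ≤ ∏ t, mu (A (ω t)) := by
  induction p with
  | zero => simp [wordProd, mu_le_iff, one_mPow]
  | succ p ih =>
    rw [wordProd, Fin.prod_univ_castSucc, mul_comm]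
    exact (mu_mProd_le_of_comm (mProd_wordProd_comm hcomm _ _)).trans
      (mul_le_mul_right (ih _) _)

end Words

theorem stmt_18_general (n N : ℕ) (A : Fin N → Matrix (Fin n) (Fin n) NNReal)
    (hcomm : ∀ i i', mProd (A i) (A i') = mProd (A i') (A i))
    (hmu : ∀ i, mu (A i) ≤ 1)
    (p : ℕ) (ω : Fin p → Fin N) :
    mu (wordProd A ω) ≤ ∏ t : Fin p, mu (A (ω t)) ∧
      (∏ t : Fin p, mu (A (ω t))) ≤ 1 :=
  ⟨mu_wordProd_le_prod hcomm ω, Finset.prod_le_one' fun t _ => hmu (ω t)⟩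

theorem stmt_18 (n N : ℕ) (A : Fin N → Matrix (Fin n) (Fin n) NNReal)
    (hcomm : ∀ i i', mProd (A i) (A i') = mProd (A i') (A i))
    (hmu : ∀ i, mu (A i) ≤ 1)
    (p : ℕ) (hp : 1 ≤ p) (ω : Fin p → Fin N) :
    mu (wordProd A ω) ≤ ∏ t : Fin p, mu (A (ω t)) ∧
      (∏ t : Fin p, mu (A (ω t))) ≤ 1 :=
  stmt_18_general n N A hcomm hmu p ω
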